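/- arXiv:2006.09922 — 5 statements merged into one kernel-verified Lean document; each statement's English description precedes it below -/
import Mathlib

section
/- For every real k > 4, m(P_{1,k}) = (1/π) ∫_0^π log( (2cosθ + k + √((2cosθ + k)² − 4)) / 2 ) dθ. -/
open Real MeasureTheory Filter

/-- Complete elliptic integral of the first kind. -/
noncomputable def ellK (z : ℝ) : ℝ :=
  ∫ x in (0:ℝ)..1, 1 / Real.sqrt ((1 - x ^ 2) * (1 - z ^ 2 * x ^ 2))

/-- Complete elliptic integral of the third kind. -/
noncomputable def ellPi (n z : ℝ) : ℝ :=
  ∫ x in (0:ℝ)..1, 1 / ((1 - n * x ^ 2) * Real.sqrt ((1 - x ^ 2) * (1 - z ^ 2 * x ^ 2)))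

/-- Mahler measure of `P_{1,k}(x,y) = x + 1/x + y + 1/y + k`. -/
noncomputable def mahlerP1 (k : ℝ) : ℝ :=
  ∫ θ in (0:ℝ)..1, ∫ φ in (0:ℝ)..1,
    Real.log (norm
      (Complex.exp (2 * Real.pi * Complex.I * θ) +
        (Complex.exp (2 * Real.pi * Complex.I * θ))⁻¹ +
       Complex.exp (2 * Real.pi * Complex.I * φ) +
        (Complex.exp (2 * Real.pi * Complex.I * φ))⁻¹ + (k : ℂ)))

/-- Mahler measure of `P̃_k(x,y) = √((k+4)/(k−4))·(x + 1/x) + y − 1/y − k/√(k−4)`. -/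
noncomputable def mahlerPt (k : ℝ) : ℝ :=
  ∫ θ in (0:ℝ)..1, ∫ φ in (0:ℝ)..1,
    Real.log (norm
      ((Real.sqrt ((k + 4) / (k - 4)) : ℂ) *
        (Complex.exp (2 * Real.pi * Complex.I * θ) +
          (Complex.exp (2 * Real.pi * Complex.I * θ))⁻¹) +
       Complex.exp (2 * Real.pi * Complex.I * φ) -
        (Complex.exp (2 * Real.pi * Complex.I * φ))⁻¹ -
       ((k / Real.sqrt (k - 4) : ℝ) : ℂ)))

/-- `B_k(e^{2πiθ}) = √((k+4)/(k−4))·2cos(2πθ) − k/√(k−4)`, real on the unit circle. -/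
noncomputable def Bt (k θ : ℝ) : ℝ :=
  Real.sqrt ((k + 4) / (k - 4)) * (2 * Real.cos (2 * Real.pi * θ)) - k / Real.sqrt (k - 4)

/-- `y₊(e^{2πiθ}) = (−B + √(B² + 4))/2`. -/
noncomputable def yPlus (k θ : ℝ) : ℝ := (-Bt k θ + Real.sqrt ((Bt k θ) ^ 2 + 4)) / 2

/-- `y₋(e^{2πiθ}) = (−B − √(B² + 4))/2`. -/
noncomputable def yMinus (k θ : ℝ) : ℝ := (-Bt k θ - Real.sqrt ((Bt k θ) ^ 2 + 4)) / 2

/-- Half-Mahler measure `m⁺(P̃_k) = ∫₀¹ log⁺|y₊(e^{2πiθ})| dθ`. -/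
noncomputable def mPlus (k : ℝ) : ℝ := ∫ θ in (0:ℝ)..1, max 0 (Real.log |yPlus k θ|)

/-- Half-Mahler measure `m⁻(P̃_k) = ∫₀¹ log⁺|y₋(e^{2πiθ})| dθ`. -/
noncomputable def mMinus (k : ℝ) : ℝ := ∫ θ in (0:ℝ)..1, max 0 (Real.log |yMinus k θ|)

/-! For fixed `θ` the inner integrand is `log (a + 2 cos 2πφ)` with `a = k + 2 cos 2πθ > 2`.
Writing `a = w + w⁻¹` with `0 < w < 1` gives `a + 2 cos t = w⁻¹ |e^{it} + w|²`, and by Jensen's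
formula `log |z + w|` has mean zero on the unit circle, so the inner integral is
`-log w = log ((a + √(a² - 4)) / 2)`. The outer integral over a full period of `cos` is twice the
integral over `[0, π]`. -/

open Complex in
theorem exp_two_pi_mul_I_add_inv (x : ℝ) :
    cexp (2 * π * I * x) + (cexp (2 * π * I * x))⁻¹ = ((2 * Real.cos (2 * π * x) : ℝ) : ℂ) := by
  rw [← Complex.exp_neg, Complex.ofReal_mul, Complex.ofReal_ofNat, Complex.ofReal_cos, two_cos]
  push_cast
  ring_nf

theorem intervalIntegral.integral_zero_two_mul_of_symm {E : Type*} [NormedAddCommGroup E]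
    [NormedSpace ℝ E] {f : ℝ → E} {a : ℝ} (hsymm : ∀ t, f (2 * a - t) = f t)
    (hf : IntervalIntegrable f volume 0 a) :
    ∫ t in 0..2 * a, f t = (2 : ℝ) • ∫ t in 0..a, f t := by
  have hreflect := intervalIntegral.integral_comp_sub_left f (2 * a) (a := 0) (b := a)
  rw [sub_zero, show 2 * a - a = a by ring] at hreflect
  simp only [hsymm] at hreflect
  have hf' : IntervalIntegrable f volume a (2 * a) := by
    have := (hf.comp_sub_left (2 * a)).symm
    simpa only [hsymm, sub_zero, show 2 * a - a = a by ring] using this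
  rw [← intervalIntegral.integral_add_adjacent_intervals hf hf', ← hreflect, two_smul]

theorem circleAverage_log_add_two_mul_re {a : ℝ} (ha : 2 < a) :
    circleAverage (fun z ↦ log (a + 2 * z.re)) 0 1 = log ((a + √(a ^ 2 - 4)) / 2) := by
  set s := √(a ^ 2 - 4)
  have hs : s ^ 2 = a ^ 2 - 4 := sq_sqrt (by nlinarith)
  have hsa : s < a := by nlinarith [sqrt_nonneg (a ^ 2 - 4)]
  have hs2 : a - 2 < s := lt_sqrt_of_sq_lt (by nlinarith)
  -- `w = (a - s) / 2 ∈ (0, 1)` satisfies `w + w⁻¹ = a` and `w⁻¹ = (a + s) / 2`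
  set c : ℂ := (-((a - s) / 2 : ℝ) : ℂ)
  have hc : ‖c‖ < 1 := by
    rw [norm_neg, Complex.norm_real, Real.norm_eq_abs, abs_lt]; constructor <;> linarith
  have hfactor : ∀ z : ℂ, ‖z‖ = 1 → a + 2 * z.re = (a + s) / 2 * ‖z - c‖ ^ 2 := by
    intro z hz
    rw [sub_neg_eq_add, Complex.sq_norm, Complex.normSq_apply]
    have hz' : z.re * z.re + z.im * z.im = 1 := by
      rw [← Complex.normSq_apply, Complex.normSq_eq_norm_sq, hz, one_pow]
    simp only [Complex.add_re, Complex.add_im, Complex.ofReal_re, Complex.ofReal_im, add_zero]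
    linear_combination (-(a + s) / 2) * hz' + (z.re / 2 + (a - s) / 8) * hs
  calc circleAverage (fun z ↦ log (a + 2 * z.re)) 0 1
      = circleAverage (fun z ↦ log ((a + s) / 2) + (2 : ℝ) • log ‖z - c‖) 0 1 := by
        refine circleAverage_congr_sphere fun z hz ↦ ?_
        rw [abs_one, mem_sphere_zero_iff_norm] at hz
        have hzc : ‖z - c‖ ≠ 0 := by
          have := norm_sub_norm_le z c
          rw [hz] at this
          linarith
        rw [hfactor z hz, log_mul (by linarith) (by positivity), log_pow, smul_eq_mul]
        push_cast
        ring
    _ = log ((a + s) / 2) + (2 : ℝ) • circleAverage (log ‖· - c‖) 0 1 := by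
        rw [circleAverage_fun_add (circleIntegrable_const _ _ _) (by fun_prop),
          circleAverage_const, circleAverage_fun_smul]
    _ = log ((a + s) / 2) := by rw [circleAverage_log_norm_sub_const₀ hc, smul_zero, add_zero]

theorem integral_log_add_two_cos_two_pi_mul {a : ℝ} (ha : 2 < a) :
    ∫ φ in (0 : ℝ)..1, log (a + 2 * cos (2 * π * φ)) =
      log ((a + √(a ^ 2 - 4)) / 2) := by
  rw [intervalIntegral.integral_comp_mul_left (fun t ↦ log (a + 2 * cos t))
    two_pi_pos.ne', ← circleAverage_log_add_two_mul_re ha, circleAverage_def]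
  simp [circleMap_zero_re]

theorem mahlerP1_eq_integral_zero_one {k : ℝ} (hk : 4 < k) :
    mahlerP1 k = ∫ θ in (0 : ℝ)..1, log ((2 * cos (2 * π * θ) + k +
      √((2 * cos (2 * π * θ) + k) ^ 2 - 4)) / 2) := by
  refine intervalIntegral.integral_congr fun θ _ ↦ ?_
  have ha : 2 < 2 * cos (2 * π * θ) + k := by linarith [neg_one_le_cos (2 * π * θ)]
  rw [← integral_log_add_two_cos_two_pi_mul ha]
  refine intervalIntegral.integral_congr fun φ _ ↦ ?_
  have hpos : 0 < 2 * cos (2 * π * θ) + k + 2 * cos (2 * π * φ) := by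
    linarith [neg_one_le_cos (2 * π * φ)]
  rw [← abs_of_pos hpos, ← Real.norm_eq_abs, ← Complex.norm_real]
  congr 2
  rw [Complex.ofReal_add, Complex.ofReal_add, ← exp_two_pi_mul_I_add_inv θ,
    ← exp_two_pi_mul_I_add_inv φ]
  ring

/-- For every real `k > 4`,
`m(P_{1,k}) = (1/π) ∫₀^π log((2cosθ + k + √((2cosθ + k)² − 4))/2) dθ`. -/
theorem mahlerP1_eq_integral (k : ℝ) (hk : 4 < k) :
    mahlerP1 k = (1 / Real.pi) * ∫ θ in (0:ℝ)..Real.pi,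
      Real.log ((2 * Real.cos θ + k +
        Real.sqrt ((2 * Real.cos θ + k) ^ 2 - 4)) / 2) := by
  set G : ℝ → ℝ := fun θ ↦ log ((2 * cos θ + k + √((2 * cos θ + k) ^ 2 - 4)) / 2)
  have hG : Continuous G := by
    refine Continuous.log (by fun_prop) fun θ ↦ ?_
    have := neg_one_le_cos θ
    have := sqrt_nonneg ((2 * cos θ + k) ^ 2 - 4)
    exact (by linarith : (0 : ℝ) < _ / 2).ne'
  rw [mahlerP1_eq_integral_zero_one hk, intervalIntegral.integral_comp_mul_left G
      two_pi_pos.ne', mul_zero, mul_one,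
    intervalIntegral.integral_zero_two_mul_of_symm (fun t ↦ by simp [G, cos_two_pi_sub])
      (hG.intervalIntegrable _ _), smul_eq_mul, smul_eq_mul]
  field_simp
end

section
/- For every real k > 4, ∫_0^π dθ/√((2cosθ + k)² − 4) = (2/k)·K(4/k). -/
/-!
Substitute `x = √k sin(θ/2) / √(k + 4 − 4 sin²(θ/2))`, an increasing bijection of `(0, π)` onto
`(0, 1)`. With `s = sin(θ/2)` both radicands factor:
`(2 cos θ + k)² − 4 = (k − 4s²)(k + 4 − 4s²)` and
`(1 − x²)(1 − (4/k)²x²) = (k + 4)² cos²(θ/2) (k − 4s²) / (k (k + 4 − 4s²)²)`,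
so that `dx / √((1 − x²)(1 − (4/k)²x²)) = (k/2) dθ / √((2 cos θ + k)² − 4)`.
The change of variables formula for injective maps needs no integrability hypothesis, so the
singularity of the elliptic integrand at `x = 1` requires no limiting argument.
-/

open Real MeasureTheory Filter

open Set

noncomputable def ellipticSubst (k θ : ℝ) : ℝ :=
  √k * sin (θ / 2) / √(k + 4 - 4 * sin (θ / 2) ^ 2)

noncomputable def ellipticSubstDeriv (k θ : ℝ) : ℝ :=
  √k * (k + 4) * cos (θ / 2) / (2 * √(k + 4 - 4 * sin (θ / 2) ^ 2) ^ 3)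

lemma two_mul_cos_add_sq_sub_four (k θ : ℝ) :
    (2 * cos θ + k) ^ 2 - 4 = (k - 4 * sin (θ / 2) ^ 2) * (k + 4 - 4 * sin (θ / 2) ^ 2) := by
  have h : cos θ = 1 - 2 * sin (θ / 2) ^ 2 := by
    rw [← cos_two_mul_eq_one_sub, mul_div_cancel₀ θ two_ne_zero]
  rw [h]
  ring

section
variable {k : ℝ}

lemma add_four_sub_four_mul_sin_sq_pos (hk : 0 < k) (x : ℝ) : 0 < k + 4 - 4 * sin x ^ 2 := by
  nlinarith [sin_sq_le_one x]

lemma hasDerivAt_ellipticSubst (hk : 0 < k) (θ : ℝ) :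
    HasDerivAt (ellipticSubst k) (ellipticSubstDeriv k θ) θ := by
  have hD := add_four_sub_four_mul_sin_sq_pos hk (θ / 2)
  have hsin : HasDerivAt (fun t => sin (t / 2)) (cos (θ / 2) / 2) θ := by
    simpa [div_eq_mul_inv] using ((hasDerivAt_id θ).div_const 2).sin
  have hden := (((hsin.pow 2).const_mul 4).const_sub (k + 4)).sqrt hD.ne'
  simp only [Pi.pow_apply] at hden
  refine ((hsin.const_mul √k).div hden (sqrt_pos.2 hD).ne').congr_deriv ?_
  have hsq := sq_sqrt hD.le
  unfold ellipticSubstDeriv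
  field_simp
  linear_combination 2 * cos (θ / 2) * hsq

lemma continuous_ellipticSubst (hk : 0 < k) : Continuous (ellipticSubst k) :=
  continuous_iff_continuousAt.2 fun θ => (hasDerivAt_ellipticSubst hk θ).continuousAt

lemma ellipticSubstDeriv_pos (hk : 0 < k) {θ : ℝ} (hθ : θ ∈ Ioo (-π) π) :
    0 < ellipticSubstDeriv k θ := by
  have hc : 0 < cos (θ / 2) := cos_pos_of_mem_Ioo ⟨by linarith [hθ.1], by linarith [hθ.2]⟩
  have := sqrt_pos.2 (add_four_sub_four_mul_sin_sq_pos hk (θ / 2))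
  unfold ellipticSubstDeriv
  positivity

lemma strictMonoOn_ellipticSubst (hk : 0 < k) : StrictMonoOn (ellipticSubst k) (Icc 0 π) := by
  refine strictMonoOn_of_hasDerivWithinAt_pos (convex_Icc 0 π)
    (continuous_ellipticSubst hk).continuousOn
    (fun θ _ => (hasDerivAt_ellipticSubst hk θ).hasDerivWithinAt) fun θ hθ => ?_
  rw [interior_Icc] at hθ
  exact ellipticSubstDeriv_pos hk ⟨by linarith [hθ.1, pi_pos], hθ.2⟩

lemma image_ellipticSubst_Ioo (hk : 0 < k) : ellipticSubst k '' Ioo 0 π = Ioo 0 1 := by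
  have h0 : ellipticSubst k 0 = 0 := by simp [ellipticSubst]
  have hπ : ellipticSubst k π = 1 := by
    simp [ellipticSubst, (sqrt_pos.2 hk).ne']
  rw [(continuous_ellipticSubst hk).continuousOn.image_Ioo_of_strictMonoOn pi_pos.le
    (strictMonoOn_ellipticSubst hk), h0, hπ]

lemma ellipticSubstDeriv_mul_ellK_integrand (hk : 4 ≤ k) {θ : ℝ} (hθ : θ ∈ Ioo (-π) π) :
    ellipticSubstDeriv k θ *
        (1 / √((1 - ellipticSubst k θ ^ 2) * (1 - (4 / k) ^ 2 * ellipticSubst k θ ^ 2))) =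
      k / 2 * (1 / √((2 * cos θ + k) ^ 2 - 4)) := by
  have hk0 : 0 < k := by linarith
  have hc : 0 < cos (θ / 2) := cos_pos_of_mem_Ioo ⟨by linarith [hθ.1], by linarith [hθ.2]⟩
  have hA : 0 ≤ k - 4 * sin (θ / 2) ^ 2 := by nlinarith [sin_sq_le_one (θ / 2)]
  have hD := add_four_sub_four_mul_sin_sq_pos hk0 (θ / 2)
  rw [two_mul_cos_add_sq_sub_four, sqrt_mul hA, ellipticSubstDeriv, ellipticSubst]
  have hcs := cos_sq' (θ / 2)
  set s := sin (θ / 2)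
  set c := cos (θ / 2)
  set D := k + 4 - 4 * s ^ 2
  have hrad : (1 - (√k * s / √D) ^ 2) * (1 - (4 / k) ^ 2 * (√k * s / √D) ^ 2) =
      ((k + 4) * c * √(k - 4 * s ^ 2) / (√k * D)) ^ 2 := by
    simp only [div_pow, mul_pow, sq_sqrt hk0.le, sq_sqrt hD.le, sq_sqrt hA, hcs]
    field_simp
    ring
  rw [hrad, sqrt_sq (by positivity)]
  field_simp
  rw [sq_sqrt hk0.le, sq_sqrt hD.le]

end

/-- For every real `k > 4`, `∫₀^π dθ/√((2cosθ + k)² − 4) = (2/k)·K(4/k)`. -/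
theorem integral_inv_sqrt_eq_ellK (k : ℝ) (hk : 4 < k) :
    (∫ θ in (0:ℝ)..Real.pi, 1 / Real.sqrt ((2 * Real.cos θ + k) ^ 2 - 4)) =
      2 / k * ellK (4 / k) := by
  have hk0 : 0 < k := by linarith
  have hsubst : ellK (4 / k) = k / 2 * ∫ θ in (0:ℝ)..π, 1 / √((2 * cos θ + k) ^ 2 - 4) := by
    rw [ellK, intervalIntegral.integral_of_le zero_le_one,
      intervalIntegral.integral_of_le pi_pos.le, integral_Ioc_eq_integral_Ioo,
      integral_Ioc_eq_integral_Ioo, ← image_ellipticSubst_Ioo hk0,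
      integral_image_eq_integral_abs_deriv_smul measurableSet_Ioo
        (fun θ _ => (hasDerivAt_ellipticSubst hk0 θ).hasDerivWithinAt)
        ((strictMonoOn_ellipticSubst hk0).injOn.mono Ioo_subset_Icc_self),
      ← integral_const_mul]
    refine setIntegral_congr_fun measurableSet_Ioo fun θ hθ => ?_
    have hθ' : θ ∈ Ioo (-π) π := ⟨by linarith [hθ.1, pi_pos], hθ.2⟩
    rw [abs_of_pos (ellipticSubstDeriv_pos hk0 hθ'), smul_eq_mul,
      ellipticSubstDeriv_mul_ellK_integrand hk.le hθ']
  rw [hsubst]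
  field_simp
end

section
/- For every real k > 4, Π(−4/k, 4/k) − (1/2)·K(4/k) = kπ/(4(k+4)). -/
open Real MeasureTheory Filter

/-!
Under the Landen substitution `w = (1 + z) x / (1 + z x²)` one has
`1 - w² = (1 - x²)(1 - z²x²) / (1 + z x²)²`, so `arcsin w / (2 (1 + z))` is an elementary
antiderivative of the integrand `(1 / (1 + z x²) - 1 / 2) / √((1 - x²)(1 - z²x²))` of
`Π(-z, z) - K(z) / 2`. As `w` runs from `0` to `1` with `x`, the combination equals
`arcsin 1 / (2 (1 + z)) = π / (4 (1 + z))`; then put `z = 4 / k`.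
-/

open Set

lemma one_add_mul_sq_pos {z x : ℝ} (hz : |z| < 1) (hx : x ^ 2 ≤ 1) : 0 < 1 + z * x ^ 2 := by
  nlinarith [neg_abs_le z, mul_le_mul_of_nonneg_left hx (abs_nonneg z)]

lemma sq_le_one_of_mem_uIcc_zero_one {x : ℝ} (hx : x ∈ uIcc (0 : ℝ) 1) : x ^ 2 ≤ 1 := by
  rw [uIcc_of_le zero_le_one] at hx
  nlinarith [hx.1, hx.2]

lemma intervalIntegrable_one_div_sqrt_ellK {z : ℝ} (hz : |z| < 1) :
    IntervalIntegrable (fun x => 1 / √((1 - x ^ 2) * (1 - z ^ 2 * x ^ 2))) volume 0 1 := by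
  have hz2 : z ^ 2 < 1 := (sq_lt_one_iff_abs_lt_one z).mpr hz
  have hpos : ∀ x ∈ uIcc (0 : ℝ) 1, 0 < 1 - z ^ 2 * x ^ 2 := fun x hx => by
    nlinarith [mul_le_mul_of_nonneg_left (sq_le_one_of_mem_uIcc_zero_one hx) (sq_nonneg z)]
  have hcont : ContinuousOn (fun x : ℝ => (√(1 - z ^ 2 * x ^ 2))⁻¹) (uIcc 0 1) :=
    ContinuousOn.inv₀ (by fun_prop) fun x hx => (sqrt_pos.mpr (hpos x hx)).ne'
  refine (intervalIntegrable_congr fun x hx => ?_).mp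
    ((Polynomial.Chebyshev.intervalIntegrable_sqrt_one_sub_sq_inv.mono_set
      (uIcc_subset_uIcc (by simp) (by simp))).mul_continuousOn hcont)
  rw [sqrt_mul' _ (hpos x (uIoc_subset_uIcc hx)).le, one_div, mul_inv, sqrt_inv]

noncomputable def landen (z x : ℝ) : ℝ := (1 + z) * x / (1 + z * x ^ 2)

lemma one_sub_landen_sq {z x : ℝ} (hd : 1 + z * x ^ 2 ≠ 0) :
    1 - landen z x ^ 2 = (1 - x ^ 2) * (1 - z ^ 2 * x ^ 2) / (1 + z * x ^ 2) ^ 2 := by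
  rw [landen]
  field_simp
  ring

lemma hasDerivAt_landen {z x : ℝ} (hd : 1 + z * x ^ 2 ≠ 0) :
    HasDerivAt (landen z) ((1 + z) * (1 - z * x ^ 2) / (1 + z * x ^ 2) ^ 2) x := by
  have hnum : HasDerivAt (fun x => (1 + z) * x) (1 + z) x := by
    simpa using (hasDerivAt_id x).const_mul (1 + z)
  have hden : HasDerivAt (fun x => 1 + z * x ^ 2) (z * (2 * x)) x := by
    simpa using ((hasDerivAt_pow 2 x).const_mul z).const_add 1
  refine (hnum.div hden hd).congr_deriv ?_
  ring

lemma hasDerivAt_arcsin_landen {z x : ℝ} (hz : |z| < 1) (hx : |x| < 1) :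
    HasDerivAt (fun x => arcsin (landen z x))
      ((1 + z) * (1 - z * x ^ 2) / ((1 + z * x ^ 2) * √((1 - x ^ 2) * (1 - z ^ 2 * x ^ 2)))) x := by
  have hz2 : z ^ 2 < 1 := (sq_lt_one_iff_abs_lt_one z).mpr hz
  have hx2 : x ^ 2 < 1 := (sq_lt_one_iff_abs_lt_one x).mpr hx
  have hzx : z ^ 2 * x ^ 2 < 1 := by nlinarith [sq_nonneg z, sq_nonneg x]
  have hd : 0 < 1 + z * x ^ 2 := one_add_mul_sq_pos hz hx2.le
  have hP : 0 < (1 - x ^ 2) * (1 - z ^ 2 * x ^ 2) := mul_pos (by linarith) (by linarith)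
  have hw : 0 < 1 - landen z x ^ 2 := by
    rw [one_sub_landen_sq hd.ne']
    positivity
  have hw₁ : landen z x ≠ 1 := fun h => by simp [h] at hw
  have hw₂ : landen z x ≠ -1 := fun h => by simp [h] at hw
  refine ((hasDerivAt_arcsin hw₂ hw₁).comp x (hasDerivAt_landen hd.ne')).congr_deriv ?_
  rw [one_sub_landen_sq hd.ne', sqrt_div hP.le, sqrt_sq hd.le]
  field_simp

lemma ellPi_neg_sub_half_ellK_eq_integral {z : ℝ} (hz : |z| < 1) :
    ellPi (-z) z - 1 / 2 * ellK z = ∫ x in (0 : ℝ)..1,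
      (1 / (1 + z * x ^ 2) - 1 / 2) * (1 / √((1 - x ^ 2) * (1 - z ^ 2 * x ^ 2))) := by
  have hK := intervalIntegrable_one_div_sqrt_ellK hz
  have hg : ContinuousOn (fun x : ℝ => 1 / (1 + z * x ^ 2)) (uIcc 0 1) :=
    continuousOn_const.div (by fun_prop) fun x hx =>
      (one_add_mul_sq_pos hz (sq_le_one_of_mem_uIcc_zero_one hx)).ne'
  have hPi : ellPi (-z) z = ∫ x in (0 : ℝ)..1,
      1 / (1 + z * x ^ 2) * (1 / √((1 - x ^ 2) * (1 - z ^ 2 * x ^ 2))) :=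
    intervalIntegral.integral_congr fun x _ => by
      rw [one_div_mul_one_div, neg_mul, sub_neg_eq_add]
  rw [hPi, ellK, ← intervalIntegral.integral_const_mul,
    ← intervalIntegral.integral_sub (hK.continuousOn_mul hg) (hK.const_mul _)]
  exact intervalIntegral.integral_congr fun x _ => by ring

lemma ellPi_neg_sub_half_ellK {z : ℝ} (hz : |z| < 1) :
    ellPi (-z) z - 1 / 2 * ellK z = π / (4 * (1 + z)) := by
  have hz1 : 0 < 1 + z := by linarith [neg_abs_le z]
  have hd : ∀ x ∈ uIcc (0 : ℝ) 1, 1 + z * x ^ 2 ≠ 0 := fun x hx =>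
    (one_add_mul_sq_pos hz (sq_le_one_of_mem_uIcc_zero_one hx)).ne'
  have hderiv : ∀ x ∈ Ioo (0 : ℝ) 1, HasDerivAt (fun x => arcsin (landen z x) / (2 * (1 + z)))
      ((1 / (1 + z * x ^ 2) - 1 / 2) * (1 / √((1 - x ^ 2) * (1 - z ^ 2 * x ^ 2)))) x := by
    intro x hx
    have hx1 : |x| < 1 := abs_lt.mpr ⟨by linarith [hx.1], hx.2⟩
    have hdx := hd x (by rw [uIcc_of_le zero_le_one]; exact Ioo_subset_Icc_self hx)
    refine ((hasDerivAt_arcsin_landen hz hx1).div_const _).congr_deriv ?_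
    field_simp
    ring
  have hcont : ContinuousOn (fun x => arcsin (landen z x) / (2 * (1 + z))) (Icc 0 1) := by
    rw [← uIcc_of_le zero_le_one]
    exact (continuous_arcsin.comp_continuousOn
      ((continuous_const.mul continuous_id).continuousOn.div (by fun_prop) hd)).div_const _
  have hint : IntervalIntegrable
      (fun x => (1 / (1 + z * x ^ 2) - 1 / 2) * (1 / √((1 - x ^ 2) * (1 - z ^ 2 * x ^ 2))))
      volume 0 1 :=
    (intervalIntegrable_one_div_sqrt_ellK hz).continuousOn_mul
      ((continuousOn_const.div (by fun_prop) hd).sub continuousOn_const)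
  rw [ellPi_neg_sub_half_ellK_eq_integral hz,
    intervalIntegral.integral_eq_sub_of_hasDerivAt_of_le zero_le_one hcont hderiv hint,
    show landen z 1 = 1 by simp [landen, hz1.ne'], show landen z 0 = 0 by simp [landen],
    arcsin_one, arcsin_zero]
  field_simp
  ring

/-- For every real `k > 4`, `Π(−4/k, 4/k) − (1/2)·K(4/k) = kπ/(4(k+4))`. -/
theorem ellPi_sub_ellK (k : ℝ) (hk : 4 < k) :
    ellPi (-4 / k) (4 / k) - (1 / 2) * ellK (4 / k) =
      k * Real.pi / (4 * (k + 4)) := by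
  have hk0 : 0 < k := by linarith
  have hz : |4 / k| < 1 := by rw [abs_of_pos (by positivity)]; exact (div_lt_one hk0).mpr hk
  rw [neg_div, ellPi_neg_sub_half_ellK hz]
  field_simp
end

section
/- For every real k with 4 < k < 2(1+√5), the half-Mahler measure m⁺(P̃_k) satisfies m⁺(P̃_k) = −(1/π) ∫_{−1}^{k/(2√(k+4))} log( B̃(t) + √(B̃(t)² + 1) ) · dt/√(1−t²), where B̃(t) = (2t√(k+4) − k)/(2√(k−4)). -/
open Real MeasureTheory Filter

/-!
On the unit circle `y₊ = exp (-arsinh (B/2))` and `B/2 = B̃(cos 2πθ)`, so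
`log⁺ |y₊| = max 0 (-arsinh (B̃ (cos 2πθ)))`. The substitution `t = cos 2πθ` turns the integral
over `θ` into one against the Chebyshev weight `dt / √(1 - t²)` on `[-1, 1]`. As `B̃` is increasing
with its zero at `t = k / (2√(k + 4)) ∈ (0, 1)`, the positive part cuts the integral off there, and
`log (b + √(b² + 1)) = arsinh b`.
-/

open Set intervalIntegral

noncomputable def Btilde (k t : ℝ) : ℝ := (2 * t * √(k + 4) - k) / (2 * √(k - 4))

lemma log_add_sqrt_sq_add_one (b : ℝ) : log (b + √(b ^ 2 + 1)) = arsinh b := by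
  rw [arsinh, add_comm (b ^ 2)]

lemma neg_add_sqrt_sq_add_four_div_two (b : ℝ) :
    (-b + √(b ^ 2 + 4)) / 2 = exp (-arsinh (b / 2)) := by
  rw [← arsinh_neg, exp_arsinh, show b ^ 2 + 4 = 2 ^ 2 * (1 + (-(b / 2)) ^ 2) by ring,
    sqrt_mul (by positivity), sqrt_sq zero_le_two]
  ring

lemma Bt_div_two {k : ℝ} (hk : 0 ≤ k + 4) (θ : ℝ) :
    Bt k θ / 2 = Btilde k (cos (2 * π * θ)) := by
  rw [Bt, Btilde, sqrt_div hk]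
  ring

lemma log_abs_yPlus {k : ℝ} (hk : 0 ≤ k + 4) (θ : ℝ) :
    log |yPlus k θ| = -arsinh (Btilde k (cos (2 * π * θ))) := by
  rw [yPlus, neg_add_sqrt_sq_add_four_div_two, abs_of_pos (exp_pos _), log_exp, Bt_div_two hk]

lemma continuous_Btilde (k : ℝ) : Continuous (Btilde k) := by
  unfold Btilde
  fun_prop

lemma Btilde_nonpos {k t : ℝ} (hk : -4 < k) (ht : t ≤ k / (2 * √(k + 4))) : Btilde k t ≤ 0 := by
  have hs : 0 < √(k + 4) := sqrt_pos.2 (by linarith)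
  rw [le_div_iff₀ (by positivity)] at ht
  exact div_nonpos_of_nonpos_of_nonneg (by linarith) (by positivity)

lemma Btilde_nonneg {k t : ℝ} (hk : -4 < k) (ht : k / (2 * √(k + 4)) ≤ t) : 0 ≤ Btilde k t := by
  have hs : 0 < √(k + 4) := sqrt_pos.2 (by linarith)
  rw [div_le_iff₀ (by positivity)] at ht
  exact div_nonneg (by linarith) (by positivity)

lemma div_two_mul_sqrt_add_four_le_one {k : ℝ} (hk : 0 ≤ k) (hk' : k < 2 * (1 + √5)) :
    k / (2 * √(k + 4)) ≤ 1 := by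
  have hs : 0 < √(k + 4) := sqrt_pos.2 (by linarith)
  rw [div_le_one (by positivity)]
  have h5 : 2 < √5 := (lt_sqrt zero_le_two).2 (by norm_num)
  nlinarith [sq_sqrt (show (0 : ℝ) ≤ k + 4 by linarith), sq_sqrt (show (0 : ℝ) ≤ 5 by norm_num),
    mul_pos (sub_pos.2 hk') (show 0 < k - 2 + 2 * √5 by linarith)]

lemma integral_comp_cos_zero_two_pi {h : ℝ → ℝ} (hh : Continuous h) :
    ∫ x in 0..2 * π, h (cos x) = 2 * ∫ x in 0..π, h (cos x) := by
  have hint (a b : ℝ) : IntervalIntegrable (fun x => h (cos x)) volume a b :=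
    (hh.comp continuous_cos).intervalIntegrable a b
  have hsymm : ∫ x in π..2 * π, h (cos x) = ∫ x in 0..π, h (cos x) := by
    simpa only [cos_two_pi_sub, sub_zero, show 2 * π - π = π by ring] using
      (integral_comp_sub_left (fun x => h (cos x)) (a := 0) (b := π) (2 * π)).symm
  rw [← integral_add_adjacent_intervals (hint 0 π) (hint π (2 * π)), hsymm]
  ring

lemma integral_comp_cos_two_pi_mul {h : ℝ → ℝ} (hh : Continuous h) :
    ∫ θ in 0..1, h (cos (2 * π * θ)) = 1 / π * ∫ t in -1..1, h t / √(1 - t ^ 2) := by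
  simp only [div_eq_mul_inv (h _), ← sqrt_inv]
  rw [← Polynomial.Chebyshev.integral_measureT,
    Polynomial.Chebyshev.integral_measureT_eq_integral_cos,
    integral_comp_mul_left (fun x => h (cos x)) two_pi_pos.ne', mul_zero, mul_one,
    integral_comp_cos_zero_two_pi hh, smul_eq_mul]
  field_simp

lemma integral_eq_integral_of_eq_zero_on_Ioc {E : Type*} [NormedAddCommGroup E] [NormedSpace ℝ E]
    {f : ℝ → E} {a b c : ℝ} (hac : a ≤ c) (hcb : c ≤ b)
    (hf : ∀ x ∈ Ioc c b, f x = 0) : ∫ x in a..b, f x = ∫ x in a..c, f x := by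
  rw [integral_of_le (hac.trans hcb), integral_of_le hac]
  refine setIntegral_eq_of_subset_of_forall_sdiff_eq_zero measurableSet_Ioc
    (Ioc_subset_Ioc_right hcb) fun x ⟨⟨hax, hxb⟩, hx⟩ => hf x ⟨?_, hxb⟩
  by_contra! hxc
  exact hx ⟨hax, hxc⟩

/-- For `4 < k < 2(1+√5)`,
`m⁺(P̃_k) = −(1/π) ∫_{−1}^{k/(2√(k+4))} log(B̃(t) + √(B̃(t)² + 1)) dt/√(1−t²)`,
where `B̃(t) = (2t√(k+4) − k)/(2√(k−4))`. -/
theorem mPlus_eq_integral (k : ℝ) (hk : 4 < k) (hk' : k < 2 * (1 + Real.sqrt 5)) :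
    mPlus k = -(1 / Real.pi) *
      ∫ t in (-1:ℝ)..(k / (2 * Real.sqrt (k + 4))),
        Real.log ((2 * t * Real.sqrt (k + 4) - k) / (2 * Real.sqrt (k - 4)) +
          Real.sqrt (((2 * t * Real.sqrt (k + 4) - k) / (2 * Real.sqrt (k - 4))) ^ 2 + 1)) /
        Real.sqrt (1 - t ^ 2) := by
  have hk₀ : -4 < k := by linarith
  have hc₀ : 0 ≤ k / (2 * √(k + 4)) := by positivity
  have hc₁ := div_two_mul_sqrt_add_four_le_one (by linarith) hk'
  set F : ℝ → ℝ := fun t => max 0 (-arsinh (Btilde k t))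
  calc mPlus k = ∫ θ in 0..1, F (cos (2 * π * θ)) := by
        simp only [mPlus, log_abs_yPlus (by linarith : 0 ≤ k + 4), F]
    _ = 1 / π * ∫ t in -1..1, F t / √(1 - t ^ 2) :=
        integral_comp_cos_two_pi_mul
          (continuous_const.max (continuous_arsinh.comp (continuous_Btilde k)).neg)
    _ = 1 / π * ∫ t in -1..k / (2 * √(k + 4)), F t / √(1 - t ^ 2) := by
        rw [integral_eq_integral_of_eq_zero_on_Ioc (by linarith) hc₁ fun t ht => ?_]
        simp [F, arsinh_nonneg_iff.2 (Btilde_nonneg hk₀ ht.1.le)]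
    _ = -(1 / π) * ∫ t in -1..k / (2 * √(k + 4)), arsinh (Btilde k t) / √(1 - t ^ 2) := by
        rw [neg_mul, ← mul_neg, ← intervalIntegral.integral_neg]
        refine congrArg _ (integral_congr fun t ht => ?_)
        rw [uIcc_of_le (by linarith)] at ht
        simp only [F, max_eq_right (neg_nonneg.2 (arsinh_nonpos_iff.2 (Btilde_nonpos hk₀ ht.2))),
          neg_div]
    _ = _ := by simp only [Btilde, log_add_sqrt_sq_add_one]
end

section
/- For every real x with 0 < x < 1, with p(x) = −x²/(1+2x) and q(x) = √( x³(2+x)/(1+2x) ), one has Π(p(x), q(x)) − ( (2+x)(1+2x)/(3(1+x)²) )·K(q(x)) = (π/6)·√(1+2x)/(1+x)². -/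
open Real MeasureTheory Filter

/-! The combination of integrands on the left has an elementary antiderivative on `[0, 1)`:
with `D = 1 + 2x`, `N(t) = t (D (1 + x + x²) - x³ t²)` and `u(t) = (1 - t²)(1 - q² t²)`,
`F(t) = √D / (3 (1 + x)²) · arctan (N(t) / (D √D √u(t)))`.
Its derivative is computed using `D³ u + N² = (D + x² t²)³`,
where `D + x² t² = D (1 - p t²)`.
Then `F(0) = 0`, and as `t → 1⁻` the radicand vanishes while `N(t) → (1 + x)³ > 0`,
so `F(t) → √D / (3 (1 + x)²) · π / 2`. -/

open Topology Set

lemma intervalIntegrable_one_div_sqrt_one_sub_sq :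
    IntervalIntegrable (fun t : ℝ => 1 / √(1 - t ^ 2)) volume (-1) 1 := by
  rw [intervalIntegrable_iff_integrableOn_Ioc_of_le (by norm_num)]
  refine intervalIntegral.integrableOn_deriv_of_nonneg continuous_arcsin.continuousOn
    (fun t ht => hasDerivAt_arcsin ht.1.ne' ht.2.ne) (fun t _ => by positivity)

lemma elliptic_radicand_pos {s t : ℝ} (hs : s < 1) (ht : t ^ 2 < 1) :
    0 < (1 - t ^ 2) * (1 - s * t ^ 2) := by
  have : s * t ^ 2 < 1 := by
    rcases le_or_gt s 0 with h | h
    · nlinarith [sq_nonneg t]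
    · nlinarith
  exact mul_pos (by linarith) (by linarith)

lemma hasDerivAt_elliptic_radicand (s t : ℝ) :
    HasDerivAt (fun t => (1 - t ^ 2) * (1 - s * t ^ 2))
      (-2 * t * (1 - s * t ^ 2) - 2 * s * t * (1 - t ^ 2)) t :=
  (((hasDerivAt_pow 2 t).const_sub 1).mul
    (((hasDerivAt_pow 2 t).const_mul s).const_sub 1)).congr_deriv
      (by simp only [Nat.cast_ofNat]; ring)

lemma intervalIntegrable_ellPi_integrand {n s : ℝ} (hn : n < 1) (hs : s < 1) :
    IntervalIntegrable (fun t => 1 / ((1 - n * t ^ 2) * √((1 - t ^ 2) * (1 - s * t ^ 2))))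
      volume 0 1 := by
  have hpos : ∀ t ∈ uIcc (0:ℝ) 1, 0 < 1 - n * t ^ 2 ∧ 0 < 1 - s * t ^ 2 := by
    intro t ht
    rw [uIcc_of_le zero_le_one] at ht
    have ht2 : t ^ 2 ≤ 1 := by nlinarith [ht.1, ht.2]
    constructor
    · rcases le_or_gt n 0 with h | h <;> nlinarith [sq_nonneg t]
    · rcases le_or_gt s 0 with h | h <;> nlinarith [sq_nonneg t]
  have hcont :
      ContinuousOn (fun t : ℝ => 1 / ((1 - n * t ^ 2) * √(1 - s * t ^ 2))) (uIcc 0 1) :=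
    ContinuousOn.div continuousOn_const (by fun_prop) fun t ht =>
      (mul_pos (hpos t ht).1 (sqrt_pos.2 (hpos t ht).2)).ne'
  refine ((intervalIntegrable_one_div_sqrt_one_sub_sq.mono_set ?_).mul_continuousOn hcont).congr
    ?_
  · rw [uIcc_of_le zero_le_one, uIcc_of_le (by norm_num)]
    exact Icc_subset_Icc (by norm_num) le_rfl
  · intro t ht
    rw [uIoc_of_le zero_le_one] at ht
    have : 0 ≤ 1 - t ^ 2 := by nlinarith [ht.1, ht.2]
    simp only [sqrt_mul this]
    field_simp

lemma hasDerivAt_arctan_div_mul_sqrt {N u : ℝ → ℝ} {N' u' k t : ℝ} (hN : HasDerivAt N N' t)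
    (hu : HasDerivAt u u' t) (hut : 0 < u t) (hk : k ≠ 0) :
    HasDerivAt (fun t => arctan (N t / (k * √(u t))))
      (k * (N' * u t - N t * u' / 2) / (√(u t) * (k ^ 2 * u t + N t ^ 2))) t := by
  have hsq : 0 < √(u t) := sqrt_pos.2 hut
  refine (hN.div ((hu.sqrt hut.ne').const_mul k) (mul_ne_zero hk hsq.ne')).arctan.congr_deriv ?_
  simp only [Pi.div_apply]
  field_simp
  rw [sq_sqrt hut.le]
  ring

lemma tendsto_arctan_div_atTop {l : Filter ℝ} {f g : ℝ → ℝ} {a : ℝ} (ha : 0 < a)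
    (hf : Tendsto f l (𝓝 a)) (hg : Tendsto g l (𝓝[>] 0)) :
    Tendsto (fun t => arctan (f t / g t)) l (𝓝 (π / 2)) :=
  (tendsto_arctan_atTop.mono_right nhdsWithin_le_nhds).comp
    (hf.pos_mul_atTop ha hg.inv_tendsto_nhdsGT_zero)

lemma one_sub_modulus_sq {x : ℝ} (hD : 1 + 2 * x ≠ 0) :
    1 - x ^ 3 * (2 + x) / (1 + 2 * x) = (1 - x) * (1 + x) ^ 3 / (1 + 2 * x) := by
  rw [eq_div_iff hD, sub_mul, div_mul_cancel₀ _ hD]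
  ring

lemma modulus_sq_lt_one {x : ℝ} (hx₀ : -1 / 2 < x) (hx₁ : x < 1) :
    x ^ 3 * (2 + x) / (1 + 2 * x) < 1 := by
  have hD : 0 < 1 + 2 * x := by linarith
  have : 0 < (1 - x) * (1 + x) ^ 3 / (1 + 2 * x) := by
    have : 0 < 1 + x := by linarith
    have : 0 < 1 - x := by linarith
    positivity
  linarith [one_sub_modulus_sq hD.ne']

lemma cube_mul_radicand_add_sq {x t : ℝ} (hD : 1 + 2 * x ≠ 0) :
    (1 + 2 * x) ^ 3 * ((1 - t ^ 2) * (1 - x ^ 3 * (2 + x) / (1 + 2 * x) * t ^ 2)) +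
      (t * ((1 + x + x ^ 2) * (1 + 2 * x) - x ^ 3 * t ^ 2)) ^ 2 =
      (1 + 2 * x + x ^ 2 * t ^ 2) ^ 3 := by
  field_simp
  ring

noncomputable def ellipticPrimitive (x t : ℝ) : ℝ :=
  √(1 + 2 * x) / (3 * (1 + x) ^ 2) *
    arctan (t * ((1 + x + x ^ 2) * (1 + 2 * x) - x ^ 3 * t ^ 2) /
      ((1 + 2 * x) * √(1 + 2 * x) *
        √((1 - t ^ 2) * (1 - x ^ 3 * (2 + x) / (1 + 2 * x) * t ^ 2))))

lemma hasDerivAt_ellipticPrimitive {x t : ℝ} (hx₀ : -1 / 2 < x) (hx₁ : x < 1)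
    (ht : t ^ 2 < 1) :
    HasDerivAt (ellipticPrimitive x)
      (1 / ((1 - -(x ^ 2) / (1 + 2 * x) * t ^ 2) *
          √((1 - t ^ 2) * (1 - x ^ 3 * (2 + x) / (1 + 2 * x) * t ^ 2))) -
        (2 + x) * (1 + 2 * x) / (3 * (1 + x) ^ 2) *
          (1 / √((1 - t ^ 2) * (1 - x ^ 3 * (2 + x) / (1 + 2 * x) * t ^ 2)))) t := by
  have hD : 0 < 1 + 2 * x := by linarith
  have h1x : 0 < 1 + x := by linarith
  have hu := elliptic_radicand_pos (modulus_sq_lt_one hx₀ hx₁) ht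
  have hN : HasDerivAt (fun t => t * ((1 + x + x ^ 2) * (1 + 2 * x) - x ^ 3 * t ^ 2))
      ((1 + x + x ^ 2) * (1 + 2 * x) - 3 * x ^ 3 * t ^ 2) t :=
    ((hasDerivAt_id t).mul (((hasDerivAt_pow 2 t).const_mul (x ^ 3)).const_sub
      ((1 + x + x ^ 2) * (1 + 2 * x)))).congr_deriv (by simp only [id, Nat.cast_ofNat]; ring)
  refine ((hasDerivAt_arctan_div_mul_sqrt hN (hasDerivAt_elliptic_radicand _ t) hu
    (by positivity)).const_mul _).congr_deriv ?_
  have hscale : ∀ Z, √(1 + 2 * x) / (3 * (1 + x) ^ 2) * ((1 + 2 * x) * √(1 + 2 * x) * Z)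
      = (1 + 2 * x) ^ 2 / (3 * (1 + x) ^ 2) * Z := fun Z => by
    rw [show ∀ a b c : ℝ, a / b * (c * a * Z) = a * a * (c * Z) / b by intros; ring,
      mul_self_sqrt hD.le]
    ring
  rw [mul_pow, sq_sqrt hD.le, mul_div_assoc ((1 + 2 * x) * √(1 + 2 * x)), hscale]
  have hw := sqrt_pos.2 hu
  generalize √((1 - t ^ 2) * (1 - x ^ 3 * (2 + x) / (1 + 2 * x) * t ^ 2)) = w at hw ⊢
  have hfactor : 1 - -x ^ 2 / (1 + 2 * x) * t ^ 2 =
      (1 + 2 * x + x ^ 2 * t ^ 2) / (1 + 2 * x) := by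
    rw [neg_div, neg_mul, sub_neg_eq_add, div_mul_eq_mul_div, one_add_div hD.ne']
  rw [← pow_succ, cube_mul_radicand_add_sq hD.ne', hfactor]
  have hfactor_pos : 0 < 1 + 2 * x + x ^ 2 * t ^ 2 := by positivity
  field_simp
  ring

lemma ellipticPrimitive_zero (x : ℝ) : ellipticPrimitive x 0 = 0 := by
  simp [ellipticPrimitive]

lemma tendsto_ellipticPrimitive_one {x : ℝ} (hx₀ : -1 / 2 < x) (hx₁ : x < 1) :
    Tendsto (ellipticPrimitive x) (𝓝[<] 1) (𝓝 (π / 6 * √(1 + 2 * x) / (1 + x) ^ 2)) := by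
  have hD : 0 < 1 + 2 * x := by linarith
  have hnum : Tendsto (fun t => t * ((1 + x + x ^ 2) * (1 + 2 * x) - x ^ 3 * t ^ 2)) (𝓝[<] 1)
      (𝓝 ((1 + x) ^ 3)) := by
    have : Continuous (fun t => t * ((1 + x + x ^ 2) * (1 + 2 * x) - x ^ 3 * t ^ 2)) := by fun_prop
    convert this.continuousWithinAt.tendsto using 2
    ring
  have hden : Tendsto (fun t => (1 + 2 * x) * √(1 + 2 * x) *
      √((1 - t ^ 2) * (1 - x ^ 3 * (2 + x) / (1 + 2 * x) * t ^ 2))) (𝓝[<] 1) (𝓝[>] 0) := by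
    refine tendsto_nhdsWithin_iff.2 ⟨?_, ?_⟩
    · have : Continuous (fun t => (1 + 2 * x) * √(1 + 2 * x) *
          √((1 - t ^ 2) * (1 - x ^ 3 * (2 + x) / (1 + 2 * x) * t ^ 2))) := by fun_prop
      simpa using this.continuousWithinAt.tendsto (x := 1) (s := Iio 1)
    · filter_upwards [Ioo_mem_nhdsLT (show (-1 : ℝ) < 1 by norm_num)] with t ht
      have ht2 : t ^ 2 < 1 := by nlinarith [ht.1, ht.2]
      have := sqrt_pos.2 (elliptic_radicand_pos (modulus_sq_lt_one hx₀ hx₁) ht2)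
      exact mul_pos (mul_pos hD (sqrt_pos.2 hD)) this
  have h1x : 0 < 1 + x := by linarith
  rw [show π / 6 * √(1 + 2 * x) / (1 + x) ^ 2 = √(1 + 2 * x) / (3 * (1 + x) ^ 2) * (π / 2) by
    field_simp; ring]
  exact (tendsto_arctan_div_atTop (by positivity) hnum hden).const_mul _

/-- For `0 < x < 1`, with `p(x) = −x²/(1+2x)` and `q(x) = √(x³(2+x)/(1+2x))`,
`Π(p(x), q(x)) − ((2+x)(1+2x)/(3(1+x)²))·K(q(x)) = (π/6)·√(1+2x)/(1+x)²`. -/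
theorem elliptic_identity_MS (x : ℝ) (hx0 : 0 < x) (hx1 : x < 1) :
    ellPi (-(x ^ 2) / (1 + 2 * x)) (Real.sqrt (x ^ 3 * (2 + x) / (1 + 2 * x))) -
      (2 + x) * (1 + 2 * x) / (3 * (1 + x) ^ 2) *
        ellK (Real.sqrt (x ^ 3 * (2 + x) / (1 + 2 * x))) =
      Real.pi / 6 * Real.sqrt (1 + 2 * x) / (1 + x) ^ 2 := by
  have hgt : -1 / 2 < x := by linarith
  have hs := modulus_sq_lt_one hgt hx1
  have hp : -(x ^ 2) / (1 + 2 * x) < 1 := by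
    have : 0 ≤ x ^ 2 / (1 + 2 * x) := by positivity
    rw [neg_div]; linarith
  have hK := (intervalIntegrable_ellPi_integrand zero_lt_one hs).const_mul
    ((2 + x) * (1 + 2 * x) / (3 * (1 + x) ^ 2))
  simp only [zero_mul, sub_zero, one_mul] at hK
  have hPi := intervalIntegrable_ellPi_integrand hp hs
  rw [ellPi, ellK, sq_sqrt (by positivity), ← intervalIntegral.integral_const_mul,
    ← intervalIntegral.integral_sub hPi hK,
    intervalIntegral.integral_eq_sub_of_hasDerivAt_of_tendsto zero_lt_one
      (fun t ht => hasDerivAt_ellipticPrimitive hgt hx1 (by nlinarith [ht.1, ht.2]))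
      (hPi.sub hK) ?_ (tendsto_ellipticPrimitive_one hgt hx1), sub_zero]
  have h0 := (hasDerivAt_ellipticPrimitive (t := 0) hgt hx1 (by norm_num)).continuousAt.tendsto
  rw [ellipticPrimitive_zero] at h0
  exact h0.mono_left nhdsWithin_le_nhds
end
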